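/- Let m ≥ 3 be an integer and a an integer with 1 ≤ a ≤ m and gcd(a, m) = 1. Then m cannot be a Carmichael–Wieferich number with base a and with base m − a simultaneously; that is, it is not the case that both m² divides a^{λ(m)} − 1 and m² divides (m − a)^{λ(m)} − 1. -/

import Mathlib

/-- The Carmichael function `λ(m)`: the smallest positive integer `n` such that
`a ^ n ≡ 1 (mod m)` for every integer `a` coprime to `m`. -/
noncomputable def carmichael (m : ℕ) : ℕ :=
  sInf {n : ℕ | 0 < n ∧ ∀ a : ℤ, Int.gcd a m = 1 → a ^ n ≡ 1 [ZMOD (m : ℤ)]}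

/-- The Carmichael quotient `C_m(a) = (a^{λ(m)} - 1) / m`. -/
noncomputable def carQuot (m : ℕ) (a : ℤ) : ℤ := (a ^ carmichael m - 1) / m

/-!
Write `λ = λ(m)`. Since `(-1)^λ ≡ 1 (mod m)` and `m ≥ 3`, the exponent `λ` is even, so the binomial
theorem gives `(m - a)^λ ≡ a^λ - λ a^(λ-1) m (mod m²)`. If both `a^λ` and `(m - a)^λ` are
`≡ 1 (mod m²)`, then `m ∣ λ a^(λ-1)`, hence `m ∣ λ` as `a` is coprime to `m`.
This is impossible because `0 < λ ≤ φ(m) < m`.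
-/

open scoped Nat

theorem Int.ModEq.pow_totient {a : ℤ} {m : ℕ} (h : IsCoprime a m) : a ^ φ m ≡ 1 [ZMOD m] := by
  rw [← ZMod.intCast_eq_intCast_iff]
  simpa only [Units.val_pow_eq_pow_val, ZMod.coe_unitOfIsCoprime, Units.val_one,
    Int.cast_pow, Int.cast_one] using
    congrArg Units.val (ZMod.pow_totient (ZMod.unitOfIsCoprime a h))

def IsUniversalExponent (m n : ℕ) : Prop :=
  0 < n ∧ ∀ a : ℤ, Int.gcd a m = 1 → a ^ n ≡ 1 [ZMOD (m : ℤ)]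

section Carmichael

variable {m n : ℕ}

lemma isUniversalExponent_totient (hm : 0 < m) : IsUniversalExponent m (φ m) :=
  ⟨Nat.totient_pos.2 hm, fun _ ha => Int.ModEq.pow_totient (Int.isCoprime_iff_gcd_eq_one.2 ha)⟩

lemma isUniversalExponent_carmichael (hm : 0 < m) : IsUniversalExponent m (carmichael m) :=
  Nat.sInf_mem (s := {n | IsUniversalExponent m n}) ⟨_, isUniversalExponent_totient hm⟩

lemma carmichael_le_totient (hm : 0 < m) : carmichael m ≤ φ m :=
  Nat.sInf_le (isUniversalExponent_totient hm)

lemma carmichael_lt_self (hm : 2 ≤ m) : carmichael m < m :=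
  (carmichael_le_totient (by omega)).trans_lt (Nat.totient_lt m (by omega))

lemma IsUniversalExponent.even (hm : 3 ≤ m) (h : IsUniversalExponent m n) : Even n := by
  have hneg := h.2 (-1) (by simp)
  by_contra hodd
  rw [(Nat.not_even_iff_odd.1 hodd).neg_one_pow] at hneg
  have : (m : ℤ) ≤ 2 := Int.le_of_dvd two_pos (by simpa using hneg.dvd)
  omega

end Carmichael

lemma sub_pow_modEq_of_even (m a : ℤ) {n : ℕ} (hn : Even n) :
    (m - a) ^ n ≡ a ^ n - n * a ^ (n - 1) * m [ZMOD m ^ 2] := by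
  obtain rfl | hpos := n.eq_zero_or_pos
  · simp [Int.ModEq.refl]
  have hodd : Odd (n - 1) := Nat.Even.sub_odd hpos hn odd_one
  have key := sq_dvd_add_pow_sub_sub m (-a) n
  rw [hn.neg_pow, hodd.neg_pow] at key
  refine (Int.modEq_iff_dvd.2 ?_).symm
  rwa [show (m - a) ^ n - (a ^ n - n * a ^ (n - 1) * m)
    = (-a + m) ^ n - -a ^ (n - 1) * m * n - a ^ n by ring]

lemma dvd_mul_pow_of_sq_dvd_sub_pow_sub_pow {m a : ℤ} {n : ℕ} (hm : m ≠ 0) (hn : Even n)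
    (h : m ^ 2 ∣ (m - a) ^ n - a ^ n) : m ∣ n * a ^ (n - 1) := by
  have hsum := dvd_add h (sub_pow_modEq_of_even m a hn).dvd
  rw [show (m - a) ^ n - a ^ n + (a ^ n - n * a ^ (n - 1) * m - (m - a) ^ n)
    = -(n * a ^ (n - 1) * m) by ring, dvd_neg, sq] at hsum
  exact (mul_dvd_mul_iff_right hm).1 hsum

theorem stmt14_general (m : ℕ) (hm : 3 ≤ m) (a : ℤ)
    (ha : Int.gcd a m = 1) :
    ¬(((m : ℤ) ^ 2 ∣ a ^ carmichael m - 1) ∧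
      ((m : ℤ) ^ 2 ∣ ((m : ℤ) - a) ^ carmichael m - 1)) := by
  rintro ⟨hd1, hd2⟩
  have hspec := isUniversalExponent_carmichael (m := m) (by omega)
  have hdvd := dvd_mul_pow_of_sq_dvd_sub_pow_sub_pow (m := (m : ℤ)) (a := a) (by positivity)
    (hspec.even hm) (by simpa using hd2.sub hd1)
  have hcop : IsCoprime (m : ℤ) (a ^ (carmichael m - 1)) :=
    (Int.isCoprime_iff_gcd_eq_one.2 ha).pow_left.symm
  have : m ∣ carmichael m := Int.natCast_dvd_natCast.1 (hcop.dvd_of_dvd_mul_right hdvd)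
  exact (Nat.le_of_dvd hspec.1 this).not_gt (carmichael_lt_self (by omega))

theorem stmt14 (m : ℕ) (hm : 3 ≤ m) (a : ℤ) (h1 : 1 ≤ a) (h2 : a ≤ m)
    (ha : Int.gcd a m = 1) :
    ¬(((m : ℤ) ^ 2 ∣ a ^ carmichael m - 1) ∧
      ((m : ℤ) ^ 2 ∣ ((m : ℤ) - a) ^ carmichael m - 1)) :=
  stmt14_general m hm a ha
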